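/- Let d, k ≥ 1 and let ν be a Borel probability measure on U(d). Then F_ν^{(k)} − F_{μ_H}^{(k)} = ‖ ∫ U^{⊗k} ⊗ conj(U)^{⊗k} dν(U) − ∫ U^{⊗k} ⊗ conj(U)^{⊗k} dμ_H(U) ‖_F², where ‖·‖_F is the Frobenius (Hilbert–Schmidt) norm. In particular F_ν^{(k)} ≥ F_{μ_H}^{(k)}. -/

import Mathlib

/-!
With `M(U) = U^{⊗k} ⊗ conj(U)^{⊗k}`, the map `M` is multiplicative, commutes with `ᴴ`, and
`Tr M(W) = |Tr W|^{2k}`; hence the Frobenius inner product `Tr(M(U) M(V)ᴴ)` is `|Tr(U Vᴴ)|^{2k}`,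
and integrating, `Tr(M_ρ M_σᴴ) = ∫∫ |Tr(U Vᴴ)|^{2k} dσ dρ` for the moment operators
`M_ρ = ∫ M dρ`. Left invariance of `μ` makes the inner integral over `μ` independent of `U`, so
`Tr(M_ν M_μᴴ) = Tr(M_μ M_μᴴ) = F_μ`, and expanding `‖M_ν - M_μ‖_F²` gives `F_ν - 2F_μ + F_μ`.
-/

open MeasureTheory Matrix
open scoped Kronecker

/-- The `k`-fold tensor (Kronecker) power of a `d × d` matrix. -/
def tensorPow {d : ℕ} (k : ℕ) (U : Matrix (Fin d) (Fin d) ℂ) :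
    Matrix (Fin k → Fin d) (Fin k → Fin d) ℂ :=
  Matrix.of fun f g => ∏ j, U (f j) (g j)

/-- The entrywise (Bochner) integral of a matrix-valued function. -/
noncomputable def matInt {G : Type*} [MeasurableSpace G] (μ : Measure G)
    {m n : Type*} (f : G → Matrix m n ℂ) : Matrix m n ℂ :=
  Matrix.of fun i j => ∫ U, f U i j ∂μ

/-- The Borel σ-algebra on the unitary group `U(d)`. -/
noncomputable instance (d : ℕ) : MeasurableSpace (Matrix.unitaryGroup (Fin d) ℂ) :=
  borel _

/-- The `k`-th frame potential `F_ν^{(k)} = ∫∫ |Tr(U V†)|^{2k} dν(U) dν(V)`. -/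
noncomputable def framePotential (d k : ℕ) (ν : Measure (Matrix.unitaryGroup (Fin d) ℂ)) : ℝ :=
  ∫ U, ∫ V, ‖((U : Matrix (Fin d) (Fin d) ℂ) *
    (V : Matrix (Fin d) (Fin d) ℂ)ᴴ).trace‖ ^ (2 * k) ∂ν ∂ν

/-- The squared Frobenius (Hilbert–Schmidt) norm of a complex matrix. -/
noncomputable def frobNormSq {m n : Type*} [Fintype m] [Fintype n] (A : Matrix m n ℂ) : ℝ :=
  ∑ i, ∑ j, Complex.normSq (A i j)

/-- The vectorized `k`-th moment operator `∫ U^{⊗k} ⊗ conj(U)^{⊗k} dν(U)`. -/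
noncomputable def vecMomentOp (d k : ℕ) (ν : Measure (Matrix.unitaryGroup (Fin d) ℂ)) :
    Matrix ((Fin k → Fin d) × (Fin k → Fin d)) ((Fin k → Fin d) × (Fin k → Fin d)) ℂ :=
  matInt ν (fun U => tensorPow k (U : Matrix (Fin d) (Fin d) ℂ) ⊗ₖ
    tensorPow k ((U : Matrix (Fin d) (Fin d) ℂ).map (starRingEnd ℂ)))

section TensorPow

variable {d k : ℕ}

theorem tensorPow_mul (A B : Matrix (Fin d) (Fin d) ℂ) :
    tensorPow k (A * B) = tensorPow k A * tensorPow k B := by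
  ext f g
  simp only [tensorPow, of_apply, mul_apply, Fintype.prod_sum, Finset.prod_mul_distrib]

theorem tensorPow_conjTranspose (A : Matrix (Fin d) (Fin d) ℂ) :
    tensorPow k Aᴴ = (tensorPow k A)ᴴ := by
  ext f g
  simp [tensorPow]

theorem tensorPow_map (A : Matrix (Fin d) (Fin d) ℂ) (φ : ℂ →+* ℂ) :
    tensorPow k (A.map φ) = (tensorPow k A).map φ := by
  ext f g
  simp [tensorPow]

theorem trace_tensorPow (A : Matrix (Fin d) (Fin d) ℂ) :
    trace (tensorPow k A) = trace A ^ k := by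
  simp only [trace, diag, tensorPow, of_apply, Fintype.sum_pow]

end TensorPow

section VecTensorPow

variable {d : ℕ} (k : ℕ)

def vecTensorPow (A : Matrix (Fin d) (Fin d) ℂ) :
    Matrix ((Fin k → Fin d) × (Fin k → Fin d)) ((Fin k → Fin d) × (Fin k → Fin d)) ℂ :=
  tensorPow k A ⊗ₖ tensorPow k (A.map (starRingEnd ℂ))

theorem vecMomentOp_eq_matInt (ν : Measure (unitaryGroup (Fin d) ℂ)) :
    vecMomentOp d k ν = matInt ν fun U => vecTensorPow k (U : Matrix (Fin d) (Fin d) ℂ) :=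
  rfl

variable {k}

theorem vecTensorPow_mul (A B : Matrix (Fin d) (Fin d) ℂ) :
    vecTensorPow k (A * B) = vecTensorPow k A * vecTensorPow k B := by
  simp only [vecTensorPow, Matrix.map_mul, tensorPow_mul, mul_kronecker_mul]

theorem vecTensorPow_conjTranspose (A : Matrix (Fin d) (Fin d) ℂ) :
    vecTensorPow k Aᴴ = (vecTensorPow k A)ᴴ := by
  rw [vecTensorPow, vecTensorPow, conjTranspose_kronecker, ← tensorPow_conjTranspose,
    ← tensorPow_conjTranspose, conjTranspose_map (starRingEnd ℂ) fun _ => rfl]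

theorem trace_vecTensorPow (A : Matrix (Fin d) (Fin d) ℂ) :
    trace (vecTensorPow k A) = ((‖trace A‖ ^ (2 * k) : ℝ) : ℂ) := by
  rw [vecTensorPow, trace_kronecker, tensorPow_map, ← AddMonoidHom.map_trace, trace_tensorPow,
    Complex.mul_conj', norm_pow]
  norm_cast
  rw [← pow_mul, mul_comm]

end VecTensorPow

section FrobNormSq

variable {m n : Type*} [Fintype m] [Fintype n]

theorem frobNormSq_nonneg (A : Matrix m n ℂ) : 0 ≤ frobNormSq A :=
  Finset.sum_nonneg fun _ _ => Finset.sum_nonneg fun _ _ => Complex.normSq_nonneg _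

theorem frobNormSq_eq_re_trace (A : Matrix m n ℂ) : frobNormSq A = (trace (A * Aᴴ)).re := by
  simp [frobNormSq, trace, mul_apply, Complex.re_sum, Complex.mul_conj]

theorem frobNormSq_sub (A B : Matrix m n ℂ) :
    frobNormSq (A - B) = frobNormSq A - 2 * (trace (A * Bᴴ)).re + frobNormSq B := by
  have hBA : (trace (B * Aᴴ)).re = (trace (A * Bᴴ)).re := by
    rw [← conjTranspose_conjTranspose B, ← conjTranspose_mul, trace_conjTranspose,
      conjTranspose_conjTranspose, Complex.star_def, Complex.conj_re]
  simp only [frobNormSq_eq_re_trace, conjTranspose_sub, Matrix.sub_mul, Matrix.mul_sub, trace_sub,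
    Complex.sub_re, hBA]
  ring

end FrobNormSq

section MatInt

variable {G : Type*} [MeasurableSpace G] {m n : Type*}

theorem matInt_conjTranspose (μ : Measure G) (f : G → Matrix m n ℂ) :
    (matInt μ f)ᴴ = matInt μ fun x => (f x)ᴴ := by
  ext i j
  exact integral_conj.symm

variable [Fintype m] [Fintype n]

theorem trace_matInt_mul (μ : Measure G) {f : G → Matrix m n ℂ}
    (hf : ∀ i j, Integrable (fun x => f x i j) μ) (B : Matrix n m ℂ) :
    trace (matInt μ f * B) = ∫ x, trace (f x * B) ∂μ := by
  simp only [trace, diag, mul_apply, matInt, of_apply]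
  rw [integral_finsetSum _ fun i _ => integrable_finsetSum _ fun j _ => (hf i j).mul_const _]
  refine Finset.sum_congr rfl fun i _ => ?_
  rw [integral_finsetSum _ fun j _ => (hf i j).mul_const _]
  simp only [integral_mul_const]

theorem trace_mul_matInt (μ : Measure G) {f : G → Matrix m n ℂ}
    (hf : ∀ i j, Integrable (fun x => f x i j) μ) (B : Matrix n m ℂ) :
    trace (B * matInt μ f) = ∫ x, trace (B * f x) ∂μ := by
  simp only [trace_mul_comm B, trace_matInt_mul μ hf]

end MatInt

section UnitaryGroup

variable {d k : ℕ}

instance (d : ℕ) : BorelSpace (unitaryGroup (Fin d) ℂ) := ⟨rfl⟩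

theorem norm_vecTensorPow_apply_le_one (U : unitaryGroup (Fin d) ℂ)
    (a b : (Fin k → Fin d) × (Fin k → Fin d)) :
    ‖vecTensorPow k (U : Matrix (Fin d) (Fin d) ℂ) a b‖ ≤ 1 := by
  have hU i j : ‖(U : Matrix (Fin d) (Fin d) ℂ) i j‖ ≤ 1 := entry_norm_bound_of_unitary U.2 i j
  simp only [vecTensorPow, tensorPow, kroneckerMap_apply, of_apply, map_apply, norm_mul,
    norm_prod, RCLike.norm_conj]
  exact mul_le_one₀ (Finset.prod_le_one (fun _ _ => norm_nonneg _) fun _ _ => hU _ _)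
    (Finset.prod_nonneg fun _ _ => norm_nonneg _)
    (Finset.prod_le_one (fun _ _ => norm_nonneg _) fun _ _ => hU _ _)

theorem continuous_vecTensorPow_apply (a b : (Fin k → Fin d) × (Fin k → Fin d)) :
    Continuous fun A : Matrix (Fin d) (Fin d) ℂ => vecTensorPow k A a b := by
  simp only [vecTensorPow, tensorPow, kroneckerMap_apply, of_apply, map_apply]
  fun_prop

theorem integrable_vecTensorPow_apply (ρ : Measure (unitaryGroup (Fin d) ℂ)) [IsFiniteMeasure ρ]
    (a b : (Fin k → Fin d) × (Fin k → Fin d)) :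
    Integrable (fun U : unitaryGroup (Fin d) ℂ => vecTensorPow k (U : Matrix _ _ ℂ) a b) ρ :=
  .of_bound ((continuous_vecTensorPow_apply a b).comp continuous_subtype_val).aestronglyMeasurable
    1 (.of_forall fun U => norm_vecTensorPow_apply_le_one U a b)

theorem trace_vecMomentOp_mul_conjTranspose (ρ σ : Measure (unitaryGroup (Fin d) ℂ))
    [IsFiniteMeasure ρ] [IsFiniteMeasure σ] :
    trace (vecMomentOp d k ρ * (vecMomentOp d k σ)ᴴ) =
      ((∫ U, ∫ V, ‖trace ((U : Matrix (Fin d) (Fin d) ℂ) * (V : Matrix _ _ ℂ)ᴴ)‖ ^ (2 * k) ∂σ ∂ρ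
        : ℝ) : ℂ) := by
  have hσ : ∀ i j, Integrable (fun V : unitaryGroup (Fin d) ℂ =>
      (vecTensorPow k (V : Matrix (Fin d) (Fin d) ℂ))ᴴ i j) σ :=
    fun i j => memLp_one_iff_integrable.1
      (memLp_one_iff_integrable.2 (integrable_vecTensorPow_apply σ j i)).star
  rw [vecMomentOp_eq_matInt, vecMomentOp_eq_matInt, matInt_conjTranspose,
    trace_matInt_mul ρ (integrable_vecTensorPow_apply ρ)]
  refine (integral_congr_ae (.of_forall fun U => ?_)).trans integral_ofReal
  rw [trace_mul_matInt σ hσ]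
  refine (integral_congr_ae (.of_forall fun V => ?_)).trans integral_ofReal
  rw [← vecTensorPow_conjTranspose, ← vecTensorPow_mul, trace_vecTensorPow]
  rfl

theorem integral_comp_trace_mul_conjTranspose {E : Type*} [NormedAddCommGroup E]
    [NormedSpace ℝ E] (μ : Measure (unitaryGroup (Fin d) ℂ)) [μ.IsMulLeftInvariant]
    (φ : ℂ → E) (U : unitaryGroup (Fin d) ℂ) :
    ∫ V, φ (trace ((U : Matrix (Fin d) (Fin d) ℂ) * (V : Matrix _ _ ℂ)ᴴ)) ∂μ =
      ∫ V, φ (trace (V : Matrix (Fin d) (Fin d) ℂ)ᴴ) ∂μ := by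
  rw [← integral_mul_left_eq_self _ U]
  refine integral_congr_ae (.of_forall fun V => ?_)
  dsimp only
  rw [Submonoid.coe_mul, conjTranspose_mul, trace_mul_comm, Matrix.mul_assoc,
    ← star_eq_conjTranspose (U : Matrix (Fin d) (Fin d) ℂ), UnitaryGroup.star_mul_self,
    Matrix.mul_one]

theorem frobNormSq_vecMomentOp (ρ : Measure (unitaryGroup (Fin d) ℂ))
    [IsFiniteMeasure ρ] : frobNormSq (vecMomentOp d k ρ) = framePotential d k ρ := by
  rw [frobNormSq_eq_re_trace, trace_vecMomentOp_mul_conjTranspose, Complex.ofReal_re,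
    framePotential]

end UnitaryGroup

theorem framePotential_sub_haar_eq_frobNormSq_general {d k : ℕ}
    (μ : Measure (Matrix.unitaryGroup (Fin d) ℂ)) [IsProbabilityMeasure μ]
    [μ.IsMulLeftInvariant]
    (ν : Measure (Matrix.unitaryGroup (Fin d) ℂ)) [IsProbabilityMeasure ν] :
    framePotential d k ν - framePotential d k μ =
      frobNormSq (vecMomentOp d k ν - vecMomentOp d k μ) ∧
    framePotential d k μ ≤ framePotential d k ν := by
  set c := ∫ V, ‖trace (V : Matrix (Fin d) (Fin d) ℂ)ᴴ‖ ^ (2 * k) ∂μ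
  have haar_average (ρ : Measure (unitaryGroup (Fin d) ℂ)) [IsProbabilityMeasure ρ] :
      ∫ U, ∫ V, ‖trace ((U : Matrix (Fin d) (Fin d) ℂ) * (V : Matrix _ _ ℂ)ᴴ)‖ ^ (2 * k) ∂μ ∂ρ
        = c := by
    simp only [integral_comp_trace_mul_conjTranspose μ fun z => ‖z‖ ^ (2 * k), integral_const,
      probReal_univ, one_smul, c]
  have hμ : framePotential d k μ = c := haar_average μ
  have hcross : (trace (vecMomentOp d k ν * (vecMomentOp d k μ)ᴴ)).re = c := by
    rw [trace_vecMomentOp_mul_conjTranspose, haar_average ν, Complex.ofReal_re]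
  have hsq : frobNormSq (vecMomentOp d k ν - vecMomentOp d k μ) = framePotential d k ν - c := by
    rw [frobNormSq_sub, frobNormSq_vecMomentOp, frobNormSq_vecMomentOp, hcross, hμ]
    ring
  exact ⟨by rw [hμ, hsq], by linarith [frobNormSq_nonneg (vecMomentOp d k ν - vecMomentOp d k μ)]⟩

/-- For any Borel probability measure `ν` on `U(d)`, the difference of
frame potentials `F_ν^{(k)} − F_{μ_H}^{(k)}` equals the squared Frobenius norm of the
difference of the vectorized moment operators; in particular `F_ν^{(k)} ≥ F_{μ_H}^{(k)}`. -/
theorem framePotential_sub_haar_eq_frobNormSq {d k : ℕ} (hd : 1 ≤ d) (hk : 1 ≤ k)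
    (μ : Measure (Matrix.unitaryGroup (Fin d) ℂ)) [IsProbabilityMeasure μ]
    [μ.IsMulLeftInvariant] [μ.IsMulRightInvariant]
    (ν : Measure (Matrix.unitaryGroup (Fin d) ℂ)) [IsProbabilityMeasure ν] :
    framePotential d k ν - framePotential d k μ =
      frobNormSq (vecMomentOp d k ν - vecMomentOp d k μ) ∧
    framePotential d k μ ≤ framePotential d k ν :=
  framePotential_sub_haar_eq_frobNormSq_general μ ν
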